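/- For every τ in the upper half-plane and every z ∈ ℂ, the quadratic theta identity ϑ₂(τ)²·θ₄(z|τ)² - ϑ₄(τ)²·θ₂(z|τ)² = ϑ₃(τ)²·θ₁(z|τ)² holds. -/

import Mathlib

/-!
Write `θ₃ = θ_0` and `θ₂ = θ_{1/2}`, where `θ_a(z|τ) = ∑_{n ∈ ℤ} exp(πiτ(n+a)² + 2πi(n+a)z)`, and
`θ₄(z) = θ₃(z + 1/2)`, `θ₁(z) = -θ₂(z + 1/2)`. Squaring `θ_a` and writing each index pair of `ℤ²` as
`(u + v, u - v)` or `(u + v + 1, u - v)`, according to its parity, gives the duplication formula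
`θ_a(z|τ)² = θ_a(2z|2τ) θ_0(0|2τ) + θ_{a+1/2}(2z|2τ) θ_{1/2}(0|2τ)`.
With `A = θ_0(0|2τ)`, `B = θ_{1/2}(0|2τ)`, `c = θ_0(2z|2τ)`, `s = θ_{1/2}(2z|2τ)` all six squares
become bilinear, and the identity is `2AB(cA - sB) - (A² - B²)(sA + cB) = (A² + B²)(cB - sA)`.
-/

open Complex

/-- θ₁ via the sine series. -/
noncomputable def jtheta1 (z τ : ℂ) : ℂ :=
  2 * Complex.exp ((Real.pi : ℂ) * I * τ / 4) *
    ∑' k : ℕ, (-1 : ℂ) ^ k * Complex.exp (((k : ℂ) ^ 2 + (k : ℂ)) * (Real.pi : ℂ) * I * τ)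
      * Complex.sin ((2 * (k : ℂ) + 1) * (Real.pi : ℂ) * z)

/-- θ₂ via the cosine series. -/
noncomputable def jtheta2 (z τ : ℂ) : ℂ :=
  2 * Complex.exp ((Real.pi : ℂ) * I * τ / 4) *
    ∑' k : ℕ, Complex.exp (((k : ℂ) ^ 2 + (k : ℂ)) * (Real.pi : ℂ) * I * τ)
      * Complex.cos ((2 * (k : ℂ) + 1) * (Real.pi : ℂ) * z)

/-- θ₃ via the cosine series. -/
noncomputable def jtheta3 (z τ : ℂ) : ℂ :=
  1 + 2 * ∑' k : ℕ, Complex.exp (((k : ℂ) + 1) ^ 2 * (Real.pi : ℂ) * I * τ)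
      * Complex.cos (2 * ((k : ℂ) + 1) * (Real.pi : ℂ) * z)

/-- θ₄ via the cosine series. -/
noncomputable def jtheta4 (z τ : ℂ) : ℂ :=
  1 + 2 * ∑' k : ℕ, (-1 : ℂ) ^ (k + 1) * Complex.exp (((k : ℂ) + 1) ^ 2 * (Real.pi : ℂ) * I * τ)
      * Complex.cos (2 * ((k : ℂ) + 1) * (Real.pi : ℂ) * z)

open Function
open scoped Real

theorem HasSum.of_sum_diff_parity {M : Type*} [AddCommMonoid M] [TopologicalSpace M]
    [ContinuousAdd M] {f : ℤ × ℤ → M} {a b : M}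
    (heven : HasSum (fun p : ℤ × ℤ => f (p.1 + p.2, p.1 - p.2)) a)
    (hodd : HasSum (fun p : ℤ × ℤ => f (p.1 + p.2 + 1, p.1 - p.2)) b) :
    HasSum f (a + b) := by
  let e : ℤ × ℤ → ℤ × ℤ := fun p => (p.1 + p.2, p.1 - p.2)
  let o : ℤ × ℤ → ℤ × ℤ := fun p => (p.1 + p.2 + 1, p.1 - p.2)
  have he : Injective e := fun p q h => by
    simp only [e, Prod.ext_iff] at h ⊢
    omega
  have ho : Injective o := fun p q h => by
    simp only [o, Prod.ext_iff] at h ⊢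
    omega
  have hcompl : IsCompl (Set.range e) (Set.range o) := by
    constructor
    · rw [disjoint_iff_inf_le]
      rintro _ ⟨⟨p, rfl⟩, ⟨q, hq⟩⟩
      simp only [e, o, Prod.ext_iff] at hq
      omega
    · rw [codisjoint_iff_le_sup]
      rintro ⟨r, s⟩ -
      rcases Int.even_or_odd (r + s) with ⟨u, hu⟩ | ⟨u, hu⟩
      · exact Or.inl ⟨(u, r - u), by simp only [e, Prod.ext_iff]; omega⟩
      · exact Or.inr ⟨(u, r - 1 - u), by simp only [o, Prod.ext_iff]; omega⟩
  exact (he.hasSum_range_iff.mpr heven).add_isCompl hcompl (ho.hasSum_range_iff.mpr hodd)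

noncomputable def thetaExp (w z τ : ℂ) : ℂ :=
  cexp (π * I * w ^ 2 * τ + 2 * π * I * w * z)

noncomputable def thetaChar (a z τ : ℂ) : ℂ :=
  ∑' n : ℤ, thetaExp (n + a) z τ

lemma thetaExp_mul_thetaExp (w w' z τ : ℂ) :
    thetaExp w z τ * thetaExp w' z τ
      = thetaExp ((w + w') / 2) (2 * z) (2 * τ) * thetaExp ((w - w') / 2) 0 (2 * τ) := by
  simp only [thetaExp, ← exp_add]
  congr 1
  ring

lemma thetaExp_add_thetaExp_neg (w z τ : ℂ) :
    thetaExp w z τ + thetaExp (-w) z τ = 2 * (cexp (π * I * w ^ 2 * τ) * cos (2 * π * w * z)) := by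
  rw [thetaExp, thetaExp, cos,
    show π * I * w ^ 2 * τ + 2 * π * I * w * z = π * I * w ^ 2 * τ + 2 * π * w * z * I by ring,
    show π * I * (-w) ^ 2 * τ + 2 * π * I * (-w) * z
      = π * I * w ^ 2 * τ + -(2 * π * w * z) * I by ring,
    exp_add, exp_add]
  ring

lemma thetaExp_int_add_eq_mul_jacobiTheta₂_term (n : ℤ) (a z τ : ℂ) :
    thetaExp (n + a) z τ = thetaExp a z τ * jacobiTheta₂_term n (z + a * τ) τ := by
  rw [thetaExp, thetaExp, jacobiTheta₂_term, ← exp_add]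
  congr 1
  ring

lemma summable_norm_thetaExp (a z : ℂ) {τ : ℂ} (hτ : 0 < τ.im) :
    Summable fun n : ℤ => ‖thetaExp (n + a) z τ‖ := by
  simp only [thetaExp_int_add_eq_mul_jacobiTheta₂_term, norm_mul]
  exact (summable_norm_iff.mpr ((summable_jacobiTheta₂_term_iff _ τ).mpr hτ)).mul_left _

lemma hasSum_thetaExp_mul_thetaExp (a b z z' : ℂ) {τ : ℂ} (hτ : 0 < τ.im) :
    HasSum (fun p : ℤ × ℤ => thetaExp (p.1 + a) z τ * thetaExp (p.2 + b) z' τ)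
      (thetaChar a z τ * thetaChar b z' τ) := by
  rw [thetaChar, thetaChar,
    tsum_mul_tsum_of_summable_norm (summable_norm_thetaExp a z hτ) (summable_norm_thetaExp b z' hτ)]
  exact (summable_mul_of_summable_norm (summable_norm_thetaExp a z hτ)
    (summable_norm_thetaExp b z' hτ)).hasSum

theorem thetaChar_sq (a z : ℂ) {τ : ℂ} (hτ : 0 < τ.im) :
    thetaChar a z τ ^ 2 = thetaChar a (2 * z) (2 * τ) * thetaChar 0 0 (2 * τ)
      + thetaChar (a + 1 / 2) (2 * z) (2 * τ) * thetaChar (1 / 2) 0 (2 * τ) := by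
  have h2τ : 0 < (2 * τ).im := by simpa using hτ
  rw [sq, ← (hasSum_thetaExp_mul_thetaExp a a z z hτ).tsum_eq]
  refine (HasSum.of_sum_diff_parity ?_ ?_).tsum_eq
  · convert hasSum_thetaExp_mul_thetaExp a 0 (2 * z) 0 h2τ using 2 with p
    rw [thetaExp_mul_thetaExp]
    congr 2 <;> push_cast <;> ring
  · convert hasSum_thetaExp_mul_thetaExp (a + 1 / 2) (1 / 2) (2 * z) 0 h2τ using 2 with p
    rw [thetaExp_mul_thetaExp]
    congr 2 <;> push_cast <;> ring

lemma thetaChar_add_one_left (a z τ : ℂ) : thetaChar (a + 1) z τ = thetaChar a z τ := by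
  refine (tsum_congr fun n => ?_).trans
    ((Equiv.addRight (1 : ℤ)).tsum_eq fun n => thetaExp (n + a) z τ)
  rw [Equiv.coe_addRight]
  push_cast
  ring_nf

lemma thetaChar_zero_sq (z : ℂ) {τ : ℂ} (hτ : 0 < τ.im) :
    thetaChar 0 z τ ^ 2 = thetaChar 0 (2 * z) (2 * τ) * thetaChar 0 0 (2 * τ)
      + thetaChar (1 / 2) (2 * z) (2 * τ) * thetaChar (1 / 2) 0 (2 * τ) := by
  rw [thetaChar_sq 0 z hτ, zero_add]

lemma thetaChar_half_sq (z : ℂ) {τ : ℂ} (hτ : 0 < τ.im) :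
    thetaChar (1 / 2) z τ ^ 2 = thetaChar (1 / 2) (2 * z) (2 * τ) * thetaChar 0 0 (2 * τ)
      + thetaChar 0 (2 * z) (2 * τ) * thetaChar (1 / 2) 0 (2 * τ) := by
  rw [thetaChar_sq _ z hτ, show (1 / 2 + 1 / 2 : ℂ) = 0 + 1 by norm_num, thetaChar_add_one_left]

lemma thetaChar_add_one (a z τ : ℂ) :
    thetaChar a (z + 1) τ = cexp (2 * π * I * a) * thetaChar a z τ := by
  rw [thetaChar, thetaChar, ← tsum_mul_left]
  congr 1 with n
  rw [thetaExp, thetaExp, ← exp_add,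
    show π * I * (n + a) ^ 2 * τ + 2 * π * I * (n + a) * (z + 1)
      = 2 * π * I * a + (π * I * (n + a) ^ 2 * τ + 2 * π * I * (n + a) * z) + n * (2 * π * I) by
      ring,
    exp_add, exp_int_mul_two_pi_mul_I, mul_one]

lemma thetaChar_zero_add_one (z τ : ℂ) : thetaChar 0 (z + 1) τ = thetaChar 0 z τ := by
  simp [thetaChar_add_one]

lemma thetaChar_half_add_one (z τ : ℂ) : thetaChar (1 / 2) (z + 1) τ = -thetaChar (1 / 2) z τ := by
  rw [thetaChar_add_one, show 2 * π * I * (1 / 2 : ℂ) = π * I by ring, exp_pi_mul_I, neg_one_mul]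

lemma jtheta3_eq_thetaChar_zero (z : ℂ) {τ : ℂ} (hτ : 0 < τ.im) :
    jtheta3 z τ = thetaChar 0 z τ := by
  have hsum := (hasSum_nat_add_iff' 1).mpr
    (summable_norm_thetaExp 0 z hτ).of_norm.hasSum.nat_add_neg
  have hterm : ∀ k : ℕ, 2 * (cexp (((k : ℂ) + 1) ^ 2 * π * I * τ) * cos (2 * ((k : ℂ) + 1) * π * z))
      = thetaExp (((k + 1 : ℕ) : ℤ) + 0) z τ + thetaExp ((-((k + 1 : ℕ) : ℤ) : ℤ) + 0) z τ := by
    intro k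
    rw [show ((-((k + 1 : ℕ) : ℤ) : ℤ) : ℂ) + 0 = -((k : ℂ) + 1) by push_cast; ring,
      show (((k + 1 : ℕ) : ℤ) : ℂ) + 0 = (k : ℂ) + 1 by push_cast; ring,
      thetaExp_add_thetaExp_neg]
    congr 3 <;> ring
  rw [jtheta3, ← tsum_mul_left, (hsum.congr_fun hterm).tsum_eq]
  simp [thetaChar, thetaExp]

lemma jtheta2_eq_thetaChar_half (z : ℂ) {τ : ℂ} (hτ : 0 < τ.im) :
    jtheta2 z τ = thetaChar (1 / 2) z τ := by
  rw [jtheta2, thetaChar, ← tsum_nat_add_neg_add_one (summable_norm_thetaExp _ z hτ).of_norm,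
    ← tsum_mul_left]
  refine tsum_congr fun k => ?_
  rw [show ((-((k : ℤ) + 1) : ℤ) : ℂ) + 1 / 2 = -((k : ℂ) + 1 / 2) by push_cast; ring,
    show (((k : ℤ)) : ℂ) + 1 / 2 = (k : ℂ) + 1 / 2 by push_cast; ring,
    thetaExp_add_thetaExp_neg, mul_assoc, ← mul_assoc (cexp _), ← exp_add]
  congr 3 <;> ring

lemma jtheta4_eq_jtheta3_add_half (z τ : ℂ) : jtheta4 z τ = jtheta3 (z + 1 / 2) τ := by
  rw [jtheta4, jtheta3]
  congr 2
  refine tsum_congr fun k => ?_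
  rw [show 2 * ((k : ℂ) + 1) * π * (z + 1 / 2)
      = 2 * ((k : ℂ) + 1) * π * z + ((k + 1 : ℕ) : ℂ) * π by push_cast; ring,
    cos_antiperiodic.add_nat_mul_eq]
  ring

lemma jtheta1_eq_neg_jtheta2_add_half (z τ : ℂ) : jtheta1 z τ = -jtheta2 (z + 1 / 2) τ := by
  rw [jtheta1, jtheta2, ← mul_neg, ← tsum_neg]
  congr 1
  refine tsum_congr fun k => ?_
  rw [show (2 * (k : ℂ) + 1) * π * (z + 1 / 2) = (2 * (k : ℂ) + 1) * π * z + π / 2 + k * π by ring,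
    cos_antiperiodic.add_nat_mul_eq, cos_add_pi_div_two]
  ring

theorem quadratic_theta_identity_24 (τ : ℂ) (hτ : 0 < τ.im) (z : ℂ) :
    jtheta2 0 τ ^ 2 * jtheta4 z τ ^ 2 - jtheta4 0 τ ^ 2 * jtheta2 z τ ^ 2
      = jtheta3 0 τ ^ 2 * jtheta1 z τ ^ 2 := by
  have two_mul_add_half : ∀ w : ℂ, 2 * (w + 1 / 2) = 2 * w + 1 := fun w => by ring
  simp only [jtheta4_eq_jtheta3_add_half, jtheta1_eq_neg_jtheta2_add_half, neg_sq,
    jtheta3_eq_thetaChar_zero _ hτ, jtheta2_eq_thetaChar_half _ hτ, thetaChar_zero_sq _ hτ,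
    thetaChar_half_sq _ hτ, two_mul_add_half, mul_zero, thetaChar_zero_add_one,
    thetaChar_half_add_one]
  ring
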